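/- arXiv:2112.13493 — 2 statements merged into one kernel-verified Lean document; each statement's English description precedes it below -/
import Mathlib

section
/- Let H be a pre-Hilbert left 𝕆-module and let u, v ∈ H be associative elements, i.e. (pq)·u = p·(q·u) and (pq)·v = p·(q·v) for all p,q ∈ 𝕆. Then ⟨u, v⟩ is a real number (its imaginary part vanishes). -/
/-
For an associative `u`, para-linearity upgrades to full linearity `⟨p·u, w⟩ = p⟨u, w⟩`: the real
trace form `Re (x y)` on `𝕆` is nondegenerate and satisfies `Re ((q p) a) = Re (q (p a))`, so it
suffices to compare real parts after multiplying by an arbitrary `q`, and there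
`Re ⟨q·(p·u), w⟩ = Re ⟨(q p)·u, w⟩` by associativity of `u`. Together with hermiticity this gives
`⟨p·u, r·v⟩ = p (⟨u, v⟩ r̄) = (p ⟨u, v⟩) r̄`, so `⟨u, v⟩` lies in the nucleus of `𝕆`, which is `ℝ`.
-/

noncomputable section

/-- The octonions, realized as the Cayley–Dickson double of the quaternions. -/
abbrev 𝕆 : Type := Quaternion ℝ × Quaternion ℝ

/-- Octonion multiplication via the Cayley–Dickson formula
`(a,b)(c,d) = (ac - d̄b, da + bc̄)`. -/
def omul (x y : 𝕆) : 𝕆 :=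
  (x.1 * y.1 - star y.2 * x.2, y.2 * x.1 + x.2 * star y.1)

/-- Octonionic conjugation. -/
def oconj (x : 𝕆) : 𝕆 := (star x.1, -x.2)

/-- The octonion `1`. -/
def oone : 𝕆 := (1, 0)

/-- Real part of an octonion. -/
def ore (x : 𝕆) : ℝ := x.1.re

/-- Embedding of the reals into the octonions. -/
def oreal (r : ℝ) : 𝕆 := ((r : Quaternion ℝ), 0)

/-- Squared norm of an octonion. -/
def onormSq (x : 𝕆) : ℝ := ore (omul x (oconj x))

/-- A pre-Hilbert left `𝕆`-module: a real vector space `H` with an `ℝ`-linear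
left `𝕆`-scalar multiplication `sm` satisfying `1·x = x` and the alternating
left-associator law, together with an `ℝ`-bilinear `𝕆`-valued inner product `inn`
which is `𝕆`-para-linear, hermitian and positive definite. -/
structure PreHilbO (H : Type*) [AddCommGroup H] [Module ℝ H] where
  sm : 𝕆 →ₗ[ℝ] H →ₗ[ℝ] H
  inn : H →ₗ[ℝ] H →ₗ[ℝ] 𝕆
  one_sm : ∀ x : H, sm oone x = x
  alt : ∀ (p q : 𝕆) (x : H),
    sm (omul p q) x - sm p (sm q x) = -(sm (omul q p) x - sm q (sm p x))
  para : ∀ (p : 𝕆) (u v : H), ore (inn (sm p u) v - omul p (inn u v)) = 0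
  herm : ∀ u v : H, inn u v = oconj (inn v u)
  pos : ∀ u : H, ∃ r : ℝ, 0 ≤ r ∧ inn u u = oreal r
  posdef : ∀ u : H, inn u u = 0 → u = 0

namespace Quaternion

-- Anonymous-constructor literals are elaborated in `QuaternionAlgebra ℝ (-1) 0 (-1)`, where the
-- `Quaternion` simp lemmas do not fire; quantifying over `q : ℍ[ℝ]` sidesteps this.
lemma exists_coords (a b c d : ℝ) :
    ∃ q : ℍ[ℝ], q.re = a ∧ q.imI = b ∧ q.imJ = c ∧ q.imK = d :=
  ⟨⟨a, b, c, d⟩, rfl, rfl, rfl, rfl⟩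

lemma eq_coe_re_of_forall_mul_comm {x : ℍ[ℝ]} (hx : ∀ q, q * x = x * q) : x = x.re := by
  obtain ⟨i, hi⟩ := exists_coords 0 1 0 0
  obtain ⟨j, hj⟩ := exists_coords 0 0 1 0
  have hxi := congrArg (fun q : ℍ[ℝ] => (q.imJ, q.imK)) (hx i)
  have hxj := congrArg (fun q : ℍ[ℝ] => q.imK) (hx j)
  simp only [imJ_mul, imK_mul, Prod.mk.injEq, hi, hj] at hxi hxj
  ext <;> simp <;> linarith

lemma exists_mul_ne_mul : ∃ q t : ℍ[ℝ], q * t ≠ t * q := by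
  obtain ⟨i, hi⟩ := exists_coords 0 1 0 0
  obtain ⟨j, hj⟩ := exists_coords 0 0 1 0
  refine ⟨i, j, fun h => ?_⟩
  have := congrArg (fun q : ℍ[ℝ] => q.imK) h
  simp only [imK_mul, hi, hj] at this
  norm_num at this

end Quaternion

open Quaternion PreHilbO

lemma oconj_oconj (x : 𝕆) : oconj (oconj x) = x := by
  simp [oconj]

lemma oconj_omul (x y : 𝕆) : oconj (omul x y) = omul (oconj y) (oconj x) := by
  simp only [omul, oconj, Prod.mk.injEq, star_sub, star_mul, star_star, star_neg]
  constructor <;> noncomm_ring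

lemma omul_sub (q x y : 𝕆) : omul q (x - y) = omul q x - omul q y := by
  simp only [omul, Prod.fst_sub, Prod.snd_sub, star_sub, Prod.mk_sub_mk, Prod.mk.injEq]
  constructor <;> noncomm_ring

lemma ore_sub (x y : 𝕆) : ore (x - y) = ore x - ore y := rfl

lemma ore_oconj_omul_self (x : 𝕆) : ore (omul (oconj x) x) = normSq x.1 + normSq x.2 := by
  have h : (omul (oconj x) x).1 = star x.1 * x.1 + star x.2 * x.2 := by
    simp only [omul, oconj, mul_neg, sub_neg_eq_add]
  rw [ore, h, star_mul_self, star_mul_self, re_add, re_coe, re_coe]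

lemma eq_zero_of_forall_ore_omul {x : 𝕆} (hx : ∀ q, ore (omul q x) = 0) : x = 0 := by
  have h := hx (oconj x)
  rw [ore_oconj_omul_self] at h
  obtain ⟨h1, h2⟩ := (add_eq_zero_iff_of_nonneg normSq_nonneg normSq_nonneg).mp h
  exact Prod.ext (normSq_eq_zero.mp h1) (normSq_eq_zero.mp h2)

lemma ore_omul_assoc (q p a : 𝕆) : ore (omul (omul q p) a) = ore (omul q (omul p a)) := by
  simp only [omul, ore, re_sub, re_add, re_mul, re_star, imI_star, imJ_star, imK_star,
    imI_mul, imJ_mul, imK_mul, imI_sub, imJ_sub, imK_sub, imI_add, imJ_add, imK_add]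
  ring

-- The nucleus of `𝕆` is `ℝ`: testing against `(q, 0), (0, 1)` shows that the first half of `a` is
-- central in `ℍ`, and against `(q, 0), (t̄, 0)` that the second half annihilates all commutators.
lemma eq_oreal_ore_of_omul_assoc {a : 𝕆} (ha : ∀ p r, omul (omul p a) r = omul p (omul a r)) :
    a = oreal (ore a) := by
  obtain ⟨x, y⟩ := a
  have hx : ∀ q : ℍ[ℝ], q * x = x * q := by
    intro q
    have := congrArg Prod.snd (ha (q, 0) (0, 1))
    simpa only [omul, mul_zero, zero_mul, sub_zero, add_zero, star_zero, one_mul] using this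
  have hy : ∀ q t : ℍ[ℝ], y * (q * t) = y * (t * q) := by
    intro q t
    have := congrArg Prod.snd (ha (q, 0) (star t, 0))
    simp only [omul, star_star, mul_zero, zero_mul, add_zero, zero_add, star_zero] at this
    simpa only [mul_assoc] using this
  obtain ⟨q, t, hqt⟩ := exists_mul_ne_mul
  have hy0 : y = 0 := by
    have := hy q t
    rw [← sub_eq_zero, ← mul_sub] at this
    exact (mul_eq_zero.mp this).resolve_right (sub_ne_zero.mpr hqt)
  simp only [oreal, ore, ← eq_coe_re_of_forall_mul_comm hx, hy0]

namespace PreHilbO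

variable {H : Type*} [AddCommGroup H] [Module ℝ H] (h : PreHilbO H)

def IsAssoc (x : H) : Prop := ∀ p q : 𝕆, h.sm (omul p q) x = h.sm p (h.sm q x)

variable {h}

lemma inn_sm_left {u : H} (hu : h.IsAssoc u) (p : 𝕆) (w : H) :
    h.inn (h.sm p u) w = omul p (h.inn u w) := by
  refine sub_eq_zero.mp (eq_zero_of_forall_ore_omul fun q => ?_)
  have hq := h.para q (h.sm p u) w
  have hqp := h.para (omul q p) u w
  rw [← hu] at hq
  rw [omul_sub, ore_sub] at *
  linarith [ore_omul_assoc q p (h.inn u w)]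

lemma inn_sm_right {v : H} (hv : h.IsAssoc v) (w : H) (r : 𝕆) :
    h.inn w (h.sm r v) = omul (h.inn w v) (oconj r) := by
  rw [h.herm, inn_sm_left hv, oconj_omul, ← h.herm]

end PreHilbO

/-- The octonionic inner product of two associative elements is real. -/
theorem stmt_7 {H : Type*} [AddCommGroup H] [Module ℝ H] (h : PreHilbO H)
    (u v : H)
    (hu : ∀ p q : 𝕆, h.sm (omul p q) u = h.sm p (h.sm q u))
    (hv : ∀ p q : 𝕆, h.sm (omul p q) v = h.sm p (h.sm q v)) :
    ∃ r : ℝ, h.inn u v = oreal r := by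
  refine ⟨_, eq_oreal_ore_of_omul_assoc fun p r => ?_⟩
  calc omul (omul p (h.inn u v)) r
      = omul (h.inn (h.sm p u) v) (oconj (oconj r)) := by rw [inn_sm_left hu, oconj_oconj]
    _ = h.inn (h.sm p u) (h.sm (oconj r) v) := (inn_sm_right hv _ _).symm
    _ = omul p (h.inn u (h.sm (oconj r) v)) := inn_sm_left hu _ _
    _ = omul p (omul (h.inn u v) r) := by rw [inn_sm_right hv, oconj_oconj]
end
end

section
/- Let H be a pre-Hilbert left 𝕆-module and x₁,…,x_N ∈ H an orthonormal system (⟨x_m, x_n⟩ = δ_{mn}) that is weak associative, i.e. ⟨p·x_n, x_m⟩ = p·⟨x_n, x_m⟩ for all p ∈ 𝕆 and all m,n. Then for every x ∈ H, ‖x‖² = Σ_{n=1}^N |⟨x, x_n⟩|² + ‖x − Σ_{n=1}^N ⟨x, x_n⟩·x_n‖²; in particular Bessel's inequality Σ_{n=1}^N |⟨x, x_n⟩|² ≤ ‖x‖² holds. -/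
noncomputable section

lemma ore_add (a b : 𝕆) : ore (a + b) = ore a + ore b := by simp [ore]
lemma ore_sub_s10 (a b : 𝕆) : ore (a - b) = ore a - ore b := by simp [ore]

def oreM : 𝕆 →+ ℝ where
  toFun := ore
  map_zero' := by simp [ore]; rfl
  map_add' := by intros; simp [ore]

lemma ore_sum {ι : Type*} (s : Finset ι) (f : ι → 𝕆) :
    ore (∑ i ∈ s, f i) = ∑ i ∈ s, ore (f i) := map_sum oreM f s

lemma ore_oconj (z : 𝕆) : ore (oconj z) = ore z := by simp [ore, oconj]

lemma omul_oone (p : 𝕆) : omul p oone = p := by simp [omul, oone]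
lemma omul_zero' (p : 𝕆) : omul p 0 = 0 := by simp [omul]
lemma oconj_zero : oconj (0 : 𝕆) = 0 := by simp [oconj]

lemma onormSq_nonneg (z : 𝕆) : 0 ≤ onormSq z := by
  have : onormSq z = Quaternion.normSq z.1 + Quaternion.normSq z.2 := by
    simp [onormSq, ore, omul, oconj, Quaternion.self_mul_star, Quaternion.star_mul_self]
  rw [this]
  have h1 := Quaternion.normSq_nonneg (a := z.1)
  have h2 := Quaternion.normSq_nonneg (a := z.2)
  linarith

lemma para' {H : Type*} [AddCommGroup H] [Module ℝ H] (h : PreHilbO H)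
    (p : 𝕆) (u v : H) : ore (h.inn (h.sm p u) v) = ore (omul p (h.inn u v)) := by
  have := h.para p u v
  rw [ore_sub_s10] at this
  linarith

lemma ore_inn_nonneg {H : Type*} [AddCommGroup H] [Module ℝ H] (h : PreHilbO H)
    (u : H) : 0 ≤ ore (h.inn u u) := by
  obtain ⟨r, hr, he⟩ := h.pos u
  rw [he]; simpa [ore, oreal] using hr

/-- Bessel equality and inequality for a weak associative orthonormal system. -/
theorem stmt_10 {H : Type*} [AddCommGroup H] [Module ℝ H] (h : PreHilbO H)
    (N : ℕ) (x : Fin N → H)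
    (horth : ∀ m n : Fin N, h.inn (x m) (x n) = if m = n then oone else 0)
    (hwa : ∀ (p : 𝕆) (m n : Fin N),
      h.inn (h.sm p (x n)) (x m) = omul p (h.inn (x n) (x m)))
    (y : H) :
    ore (h.inn y y)
      = (∑ n : Fin N, onormSq (h.inn y (x n)))
        + ore (h.inn (y - ∑ n : Fin N, h.sm (h.inn y (x n)) (x n))
               (y - ∑ n : Fin N, h.sm (h.inn y (x n)) (x n)))
    ∧ (∑ n : Fin N, onormSq (h.inn y (x n))) ≤ ore (h.inn y y) := by
  set c : Fin N → 𝕆 := fun n => h.inn y (x n) with hc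
  set s : H := ∑ n : Fin N, h.sm (c n) (x n) with hs
  have key1 : ∀ n : Fin N, ore (h.inn (h.sm (c n) (x n)) y) = onormSq (c n) := by
    intro n
    rw [para', h.herm (x n) y]
    rfl
  have key3 : ore (h.inn s y) = ∑ n : Fin N, onormSq (c n) := by
    rw [hs, map_sum, LinearMap.sum_apply, ore_sum]
    exact Finset.sum_congr rfl fun n _ => key1 n
  have key2 : ore (h.inn y s) = ∑ n : Fin N, onormSq (c n) := by
    rw [h.herm y s, ore_oconj, key3]
  have hinnxs : ∀ m : Fin N, h.inn (x m) s = oconj (c m) := by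
    intro m
    rw [hs, map_sum]
    have : ∀ n : Fin N, h.inn (x m) (h.sm (c n) (x n))
        = if n = m then oconj (c n) else 0 := by
      intro n
      rw [h.herm, hwa, horth]
      split_ifs with hnm
      · rw [omul_oone]
      · rw [omul_zero', oconj_zero]
    simp only [this]
    simp
  have key4 : ore (h.inn s s) = ∑ n : Fin N, onormSq (c n) := by
    have hf : h.inn s = ∑ m : Fin N, h.inn (h.sm (c m) (x m)) := by rw [hs, map_sum]
    rw [hf, LinearMap.sum_apply, ore_sum]
    refine Finset.sum_congr rfl fun m _ => ?_
    rw [para', hinnxs]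
    rfl
  have expand : ore (h.inn (y - s) (y - s))
      = ore (h.inn y y) - ∑ n : Fin N, onormSq (c n) := by
    simp only [map_sub, LinearMap.sub_apply, ore_sub_s10]
    rw [key2, key3, key4]
    ring
  constructor
  · rw [expand]; ring
  · have := ore_inn_nonneg h (y - s)
    rw [expand] at this
    linarith
end
end
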